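/- For every natural number k, the ordinary generating function of the k-th column of the generalized Stirling numbers satisfies, in the formal power series ring K[[X]], the identity (∏_{i=1}^{k} (1 − a(i)·X)) · (Σ_{n≥0} S(n,k)·X^n) = X^k. -/

import Mathlib

/-- Generalized (Comtet/ψ~-) Stirling numbers of the second kind associated with
the sequence `a`. -/
def genStirling {K : Type*} [CommRing K] (a : ℕ → K) : ℕ → ℕ → K
  | 0, 0 => 1
  | 0, _ + 1 => 0
  | _ + 1, 0 => 0
  | n + 1, k + 1 => genStirling a n k + a (k + 1) * genStirling a n (k + 1)

lemma genStirling_step {K : Type*} [CommRing K] (a : ℕ → K) (k : ℕ) :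
    (1 - PowerSeries.C (a (k + 1)) * PowerSeries.X) *
      PowerSeries.mk (fun n => genStirling a n (k + 1)) =
      PowerSeries.X * PowerSeries.mk (fun n => genStirling a n k) := by
  ext n
  cases n with
  | zero =>
    simp [genStirling, sub_mul, PowerSeries.coeff_zero_eq_constantCoeff]
  | succ m =>
    rw [sub_mul, one_mul, map_sub, mul_assoc, PowerSeries.coeff_succ_X_mul,
      PowerSeries.coeff_C_mul, PowerSeries.coeff_succ_X_mul]
    simp [genStirling]

/-- column ordinary generating function:
`(∏_{i=1}^{k} (1 − a(i)·X)) · (Σ_{n≥0} S(n,k)·X^n) = X^k` in `K[[X]]`. -/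
theorem genStirling_column_ogf {K : Type*} [CommRing K] (a : ℕ → K) (ha : a 0 = 0) (k : ℕ) :
    (∏ i ∈ Finset.Icc 1 k, (1 - PowerSeries.C (a i) * PowerSeries.X)) *
      PowerSeries.mk (fun n => genStirling a n k) = (PowerSeries.X : PowerSeries K) ^ k := by
  induction k with
  | zero =>
    simp only [Finset.Icc_self, pow_zero]
    rw [show (Finset.Icc 1 0 : Finset ℕ) = ∅ by rfl, Finset.prod_empty, one_mul]
    ext n
    cases n with
    | zero => simp [genStirling]
    | succ m => simp [genStirling, PowerSeries.coeff_one]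
  | succ k ih =>
    rw [Finset.prod_Icc_succ_top (Nat.le_add_left 1 k), mul_assoc, genStirling_step,
      ← mul_assoc, mul_comm _ PowerSeries.X, mul_assoc, ih, pow_succ, mul_comm]
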